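/- Let G be a simple graph on a finite vertex type V such that every vertex has degree at most d, with d ≥ 1, and let A = (1/d)·A_G be the normalized adjacency matrix over ℝ. Let c : ℕ → ℝ be a sequence with ∑_k |c_k| < ∞, and set K = ∑_{k=0}^∞ c_k A^k. Let S and T be subsets of V and D ∈ ℕ such that for every s ∈ S and t ∈ T, either s and t are not reachable from one another or dist_G(s, t) ≥ D. Then the submatrix of K with rows in S and columns in T satisfies ‖K_{S,T}‖ ≤ ∑_{k ≥ D} |c_k|. -/

import Mathlib

/-!
The `(s, t)` entry of `A ^ k` is `d⁻ᵏ` times the number of walks of length `k` from `s` to `t`,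
so the block `(A ^ k)_{S,T}` vanishes for `k < D`. The degree bound gives `‖A‖ ≤ 1` by the Schur
test, hence `‖(A ^ k)_{S,T}‖ ≤ ‖A ^ k‖ ≤ 1`, and only the terms `k ≥ D` of the series for
`K_{S,T}` contribute, each with norm at most `|c k|`.
-/

open Matrix

/-- The ℓ²→ℓ² operator norm of a real matrix (the norm induced by the Euclidean
norms on the domain and codomain). -/
noncomputable def l2OpNorm {α β : Type*} [Fintype α] [Fintype β] [DecidableEq β]
    (M : Matrix α β ℝ) : ℝ :=
  ‖LinearMap.toContinuousLinearMap (Matrix.toEuclideanLin M)‖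

open scoped Matrix.Norms.L2Operator

namespace Matrix

variable {l m n p 𝕜 : Type*} [RCLike 𝕜] [Fintype l] [Fintype m] [Fintype n] [Fintype p]

lemma l2_opNorm_one_le [DecidableEq n] : ‖(1 : Matrix n n 𝕜)‖ ≤ 1 := by
  rcases isEmpty_or_nonempty n with hn | hn
  · simp [Subsingleton.elim (1 : Matrix n n 𝕜) 0]
  · exact CStarRing.norm_one.le

lemma l2_opNorm_pow_le_one [DecidableEq n] {M : Matrix n n 𝕜} (hM : ‖M‖ ≤ 1) :
    ∀ k : ℕ, ‖M ^ k‖ ≤ 1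
  | 0 => by simpa using l2_opNorm_one_le
  | k + 1 => by
    rw [pow_succ]
    exact (l2_opNorm_mul _ _).trans
      (mul_le_one₀ (l2_opNorm_pow_le_one hM k) (norm_nonneg _) hM)

lemma l2_opNorm_one_submatrix_le [DecidableEq l] [DecidableEq m] {f : l → m}
    (hf : f.Injective) : ‖(1 : Matrix m m 𝕜).submatrix f id‖ ≤ 1 := by
  set P := (1 : Matrix m m 𝕜).submatrix f id
  have hP : Pᴴᴴ * Pᴴ = 1 := by
    have hmul := mul_submatrix_one (Equiv.refl m) f P
    simp only [Equiv.coe_refl, Equiv.refl_symm, Function.id_comp] at hmul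
    rw [conjTranspose_conjTranspose, conjTranspose_submatrix, conjTranspose_one, hmul]
    exact submatrix_one f hf
  have hsq := l2_opNorm_conjTranspose_mul_self Pᴴ
  rw [hP, l2_opNorm_conjTranspose] at hsq
  nlinarith [norm_nonneg P, l2_opNorm_one_le (n := l) (𝕜 := 𝕜)]

lemma l2_opNorm_submatrix_le [DecidableEq l] [DecidableEq m] [DecidableEq n] [DecidableEq p]
    (M : Matrix m n 𝕜) {f : l → m} {g : p → n} (hf : f.Injective) (hg : g.Injective) :
    ‖M.submatrix f g‖ ≤ ‖M‖ := by
  have hfac : M.submatrix f g =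
      (1 : Matrix m m 𝕜).submatrix f id * M * ((1 : Matrix n n 𝕜).submatrix g id)ᴴ := by
    ext i j
    simp [mul_apply, one_apply]
  calc ‖M.submatrix f g‖
      ≤ ‖(1 : Matrix m m 𝕜).submatrix f id‖ * ‖M‖ * ‖(1 : Matrix n n 𝕜).submatrix g id‖ := by
        rw [hfac, ← l2_opNorm_conjTranspose ((1 : Matrix n n 𝕜).submatrix g id)]
        exact (l2_opNorm_mul _ _).trans
          (mul_le_mul_of_nonneg_right (l2_opNorm_mul _ _) (norm_nonneg _))
    _ ≤ 1 * ‖M‖ * 1 := by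
        gcongr
        · exact l2_opNorm_one_submatrix_le hf
        · exact l2_opNorm_one_submatrix_le hg
    _ = ‖M‖ := by ring

/-- The Schur test. -/
lemma l2_opNorm_le_sqrt_of_sum_norm_le [DecidableEq n] (M : Matrix m n 𝕜) {r c : ℝ}
    (hr : ∀ i, ∑ j, ‖M i j‖ ≤ r) (hc : ∀ j, ∑ i, ‖M i j‖ ≤ c) : ‖M‖ ≤ √(r * c) := by
  rcases isEmpty_or_nonempty m with hm | ⟨⟨i₀⟩⟩
  · simp [Subsingleton.elim M 0]
  have hr₀ : 0 ≤ r := (Finset.sum_nonneg fun j _ => norm_nonneg _).trans (hr i₀)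
  rw [l2_opNorm_def]
  refine ContinuousLinearMap.opNorm_le_bound _ (Real.sqrt_nonneg _) fun x => ?_
  rw [← Real.sqrt_sq (norm_nonneg x), ← Real.sqrt_mul' _ (sq_nonneg _)]
  refine Real.le_sqrt_of_sq_le ?_
  have hrow : ∀ i, ‖(M *ᵥ x) i‖ ^ 2 ≤ r * ∑ j, ‖M i j‖ * ‖x j‖ ^ 2 := fun i => calc
    ‖(M *ᵥ x) i‖ ^ 2 ≤ (∑ j, ‖M i j‖ * ‖x j‖) ^ 2 := by
      gcongr
      exact (norm_sum_le _ _).trans_eq (by simp [norm_mul])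
    _ ≤ (∑ j, ‖M i j‖) * ∑ j, ‖M i j‖ * ‖x j‖ ^ 2 :=
      Finset.sum_sq_le_sum_mul_sum_of_sq_le_mul _ (fun _ _ => norm_nonneg _)
        (fun _ _ => by positivity) (fun _ _ => (by ring : _ = _).le)
    _ ≤ r * ∑ j, ‖M i j‖ * ‖x j‖ ^ 2 := by gcongr; exact hr i
  calc ‖(toEuclideanLin.trans LinearMap.toContinuousLinearMap) M x‖ ^ 2
      = ∑ i, ‖(M *ᵥ x) i‖ ^ 2 := by simp [EuclideanSpace.norm_sq_eq]
    _ ≤ ∑ i, r * ∑ j, ‖M i j‖ * ‖x j‖ ^ 2 := Finset.sum_le_sum fun i _ => hrow i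
    _ = r * ∑ j, (∑ i, ‖M i j‖) * ‖x j‖ ^ 2 := by
      rw [← Finset.mul_sum, Finset.sum_comm]
      simp [Finset.sum_mul]
    _ ≤ r * ∑ j, c * ‖x j‖ ^ 2 := by gcongr with j; exact hc j
    _ = r * c * ‖x‖ ^ 2 := by simp [EuclideanSpace.norm_sq_eq, Finset.mul_sum, mul_assoc]

end Matrix

theorem HasSum.matrix_submatrix {X l m n p R : Type*} [AddCommMonoid R] [TopologicalSpace R]
    {f : X → Matrix m n R} {a : Matrix m n R} (hf : HasSum f a) (e₁ : l → m) (e₂ : p → n) :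
    HasSum (fun x => (f x).submatrix e₁ e₂) (a.submatrix e₁ e₂) :=
  Pi.hasSum.2 fun i => Pi.hasSum.2 fun j => Pi.hasSum.1 (Pi.hasSum.1 hf (e₁ i)) (e₂ j)

theorem norm_tsum_le_tsum_subtype_of_eq_zero_of_lt {E : Type*} [SeminormedAddCommGroup E]
    {f : ℕ → E} {g : ℕ → ℝ} {D : ℕ} (hg : Summable g) (hfg : ∀ k, ‖f k‖ ≤ g k)
    (hf : ∀ k < D, f k = 0) : ‖∑' k, f k‖ ≤ ∑' k : {k : ℕ // D ≤ k}, g k := by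
  have hsupp : Function.support f ⊆ {k | D ≤ k} := fun k hk =>
    le_of_not_gt fun hkD => hk (hf k hkD)
  rw [← tsum_subtype_eq_of_support_subset hsupp]
  exact tsum_of_norm_bounded (hg.subtype _).hasSum fun k => hfg k

namespace SimpleGraph

variable {V : Type*} [Fintype V] [DecidableEq V] (G : SimpleGraph V) [DecidableRel G.Adj]

theorem adjMatrix_pow_apply_eq_zero (R : Type*) [Semiring R] {u v : V} {k : ℕ}
    (h : ¬ G.Reachable u v ∨ k < G.dist u v) : (G.adjMatrix R ^ k) u v = 0 := by
  have : IsEmpty {p : G.Walk u v | p.length = k} := ⟨fun ⟨p, hp⟩ => by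
    rcases h with h | h
    · exact h ⟨p⟩
    · exact (G.dist_le p).not_gt (hp ▸ h)⟩
  rw [adjMatrix_pow_apply_eq_card_walk, Fintype.card_eq_zero, Nat.cast_zero]

theorem l2_opNorm_adjMatrix_le {𝕜 : Type*} [RCLike 𝕜] {d : ℕ} (hdeg : ∀ v, G.degree v ≤ d) :
    ‖G.adjMatrix 𝕜‖ ≤ d := by
  have hrow : ∀ u, ∑ v, ‖G.adjMatrix 𝕜 u v‖ ≤ d := fun u => by
    have hdeg_u := hdeg u
    rw [← card_neighborFinset_eq_degree, neighborFinset_eq_filter] at hdeg_u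
    simpa [adjMatrix_apply, apply_ite] using hdeg_u
  have hcol : ∀ v, ∑ u, ‖G.adjMatrix 𝕜 u v‖ ≤ d := fun v => by
    simpa only [G.isSymm_adjMatrix.apply v] using hrow v
  simpa using (G.adjMatrix 𝕜).l2_opNorm_le_sqrt_of_sum_norm_le hrow hcol

end SimpleGraph

theorem stmt6_general {V : Type*} [Fintype V] [DecidableEq V]
    (G : SimpleGraph V) [DecidableRel G.Adj]
    (d : ℕ) (hdeg : ∀ v : V, G.degree v ≤ d)
    (A : Matrix V V ℝ) (hA : A = (1 / (d : ℝ)) • G.adjMatrix ℝ)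
    (c : ℕ → ℝ) (hc : Summable fun k => |c k|)
    (K : Matrix V V ℝ) (hK : K = ∑' k : ℕ, c k • A ^ k)
    (S T : Finset V) (D : ℕ)
    (hST : ∀ s ∈ S, ∀ t ∈ T, ¬ G.Reachable s t ∨ D ≤ G.dist s t) :
    l2OpNorm (K.submatrix (fun i : S => (i : V)) (fun j : T => (j : V))) ≤
      ∑' k : {k : ℕ // D ≤ k}, |c k| := by
  have hA₁ : ‖A‖ ≤ 1 := calc
    ‖A‖ ≤ ‖1 / (d : ℝ)‖ * ‖G.adjMatrix ℝ‖ := hA ▸ norm_smul_le _ _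
    _ ≤ 1 / d * d := by
      rw [Real.norm_of_nonneg (by positivity)]
      gcongr
      exact G.l2_opNorm_adjMatrix_le hdeg
    _ ≤ 1 := by rw [one_div_mul_eq_div]; exact div_self_le_one _
  have hterm : ∀ k, ‖c k • A ^ k‖ ≤ |c k| := fun k =>
    (norm_smul_le _ _).trans (mul_le_of_le_one_right (abs_nonneg _) (l2_opNorm_pow_le_one hA₁ k))
  have hsum : HasSum (fun k => c k • A ^ k) K := hK ▸ (hc.of_norm_bounded hterm).hasSum
  show ‖K.submatrix (fun i : S => (i : V)) (fun j : T => (j : V))‖ ≤ _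
  rw [← (hsum.matrix_submatrix _ _).tsum_eq]
  refine norm_tsum_le_tsum_subtype_of_eq_zero_of_lt hc (fun k => ?_) (fun k hk => ?_)
  · exact (l2_opNorm_submatrix_le _ Subtype.val_injective Subtype.val_injective).trans (hterm k)
  · ext i j
    have hij := (hST i i.2 j j.2).imp_right hk.trans_le
    simp [hA, smul_pow, G.adjMatrix_pow_apply_eq_zero ℝ hij]

theorem stmt6 {V : Type*} [Fintype V] [DecidableEq V]
    (G : SimpleGraph V) [DecidableRel G.Adj]
    (d : ℕ) (hd1 : 1 ≤ d) (hdeg : ∀ v : V, G.degree v ≤ d)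
    (A : Matrix V V ℝ) (hA : A = (1 / (d : ℝ)) • G.adjMatrix ℝ)
    (c : ℕ → ℝ) (hc : Summable fun k => |c k|)
    (K : Matrix V V ℝ) (hK : K = ∑' k : ℕ, c k • A ^ k)
    (S T : Finset V) (D : ℕ)
    (hST : ∀ s ∈ S, ∀ t ∈ T, ¬ G.Reachable s t ∨ D ≤ G.dist s t) :
    l2OpNorm (K.submatrix (fun i : S => (i : V)) (fun j : T => (j : V))) ≤
      ∑' k : {k : ℕ // D ≤ k}, |c k| :=
  stmt6_general G d hdeg A hA c hc K hK S T D hST
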